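/- arXiv:1507.01708 — 4 statements merged into one kernel-verified Lean document; each statement's English description precedes it below -/
import Mathlib

section
/- For every regular expression T over unordered words, the normalization function Norm satisfies ⟦Norm(T)⟧ = ⟦T⟧, i.e., normalization preserves semantics. -/
/-- Conflict-free regular expressions over unordered words:
repetition (`*`, `⁺`) is only allowed over single symbols. -/
inductive RE (σ : Type) : Type
  | eps : RE σ
  | sym : σ → RE σ
  | union : RE σ → RE σ → RE σ
  | conc : RE σ → RE σ → RE σ
  | star : σ → RE σ
  | plus : σ → RE σ
  deriving DecidableEq

/-- Unordered concatenation of languages of multisets. -/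
def uconc {σ : Type} (L₁ L₂ : Set (Multiset σ)) : Set (Multiset σ) :=
  {w | ∃ w₁ ∈ L₁, ∃ w₂ ∈ L₂, w = w₁ + w₂}

/-- Semantics of regular expressions: sets of finite multisets. -/
def resem {σ : Type} : RE σ → Set (Multiset σ)
  | .eps => {0}
  | .sym a => {{a}}
  | .union t₁ t₂ => resem t₁ ∪ resem t₂
  | .conc t₁ t₂ => uconc (resem t₁) (resem t₂)
  | .star a => {w | ∃ n : ℕ, w = Multiset.replicate n a}
  | .plus a => {w | ∃ n : ℕ, 1 ≤ n ∧ w = Multiset.replicate n a}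

/-- Symbols occurring in a regular expression. -/
def syms {σ : Type} [DecidableEq σ] : RE σ → Finset σ
  | .eps => ∅
  | .sym a => {a}
  | .union t₁ t₂ => syms t₁ ∪ syms t₂
  | .conc t₁ t₂ => syms t₁ ∪ syms t₂
  | .star a => {a}
  | .plus a => {a}

/-- Conflict-freedom: single occurrence of every symbol. -/
def CF {σ : Type} [DecidableEq σ] : RE σ → Prop
  | .union t₁ t₂ => CF t₁ ∧ CF t₂ ∧ Disjoint (syms t₁) (syms t₂)
  | .conc t₁ t₂ => CF t₁ ∧ CF t₂ ∧ Disjoint (syms t₁) (syms t₂)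
  | _ => True

/-- Distribution of concatenation over unions. -/
def distr {σ : Type} : RE σ → RE σ → RE σ
  | .union A B, C => .union (distr A C) (distr B C)
  | A, .union B C => .union (distr A B) (distr A C)
  | A, B => .conc A B

/-- Normalization into disjunctive normal form. -/
def norm {σ : Type} : RE σ → RE σ
  | .eps => .eps
  | .sym a => .sym a
  | .union t₁ t₂ => .union (norm t₁) (norm t₂)
  | .conc t₁ t₂ => distr (norm t₁) (norm t₂)
  | .star a => .star a
  | .plus a => .plus a

/-- Union-free (clause) expressions. -/
def isClause {σ : Type} : RE σ → Prop
  | .union _ _ => False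
  | .conc t₁ t₂ => isClause t₁ ∧ isClause t₂
  | _ => True

/-- Disjunctive normal form: a union of union-free clauses. -/
def isDNF {σ : Type} : RE σ → Prop
  | .union t₁ t₂ => isDNF t₁ ∧ isDNF t₂
  | t => isClause t

/-- Number of occurrences of the union operator. -/
def unionCount {σ : Type} : RE σ → ℕ
  | .union t₁ t₂ => unionCount t₁ + unionCount t₂ + 1
  | .conc t₁ t₂ => unionCount t₁ + unionCount t₂
  | _ => 0


lemma uconc_union_left {σ : Type} (L₁ L₂ L : Set (Multiset σ)) :
    uconc (L₁ ∪ L₂) L = uconc L₁ L ∪ uconc L₂ L := by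
  ext w; constructor
  · rintro ⟨w₁, (h|h), w₂, h₂, rfl⟩
    · exact Or.inl ⟨w₁, h, w₂, h₂, rfl⟩
    · exact Or.inr ⟨w₁, h, w₂, h₂, rfl⟩
  · rintro (⟨w₁, h, w₂, h₂, rfl⟩|⟨w₁, h, w₂, h₂, rfl⟩)
    · exact ⟨w₁, Or.inl h, w₂, h₂, rfl⟩
    · exact ⟨w₁, Or.inr h, w₂, h₂, rfl⟩

lemma uconc_union_right {σ : Type} (L L₁ L₂ : Set (Multiset σ)) :
    uconc L (L₁ ∪ L₂) = uconc L L₁ ∪ uconc L L₂ := by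
  ext w; constructor
  · rintro ⟨w₁, h, w₂, (h₂|h₂), rfl⟩
    · exact Or.inl ⟨w₁, h, w₂, h₂, rfl⟩
    · exact Or.inr ⟨w₁, h, w₂, h₂, rfl⟩
  · rintro (⟨w₁, h, w₂, h₂, rfl⟩|⟨w₁, h, w₂, h₂, rfl⟩)
    · exact ⟨w₁, h, w₂, Or.inl h₂, rfl⟩
    · exact ⟨w₁, h, w₂, Or.inr h₂, rfl⟩

lemma resem_distr {σ : Type} (A B : RE σ) :
    resem (distr A B) = uconc (resem A) (resem B) := by
  induction A generalizing B with
  | union A₁ A₂ ih₁ ih₂ =>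
    simp [distr, resem, ih₁, ih₂, uconc_union_left]
  | eps =>
    induction B with
    | union B₁ B₂ ihB₁ ihB₂ => simp [distr, resem, ihB₁, ihB₂, uconc_union_right]
    | _ => simp [distr, resem]
  | sym a =>
    induction B with
    | union B₁ B₂ ihB₁ ihB₂ => simp [distr, resem, ihB₁, ihB₂, uconc_union_right]
    | _ => simp [distr, resem]
  | conc A₁ A₂ ih₁ ih₂ =>
    induction B with
    | union B₁ B₂ ihB₁ ihB₂ => simp [distr, resem, ihB₁, ihB₂, uconc_union_right]
    | _ => simp [distr, resem]
  | star a =>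
    induction B with
    | union B₁ B₂ ihB₁ ihB₂ => simp [distr, resem, ihB₁, ihB₂, uconc_union_right]
    | _ => simp [distr, resem]
  | plus a =>
    induction B with
    | union B₁ B₂ ihB₁ ihB₂ => simp [distr, resem, ihB₁, ihB₂, uconc_union_right]
    | _ => simp [distr, resem]

theorem resem_norm {σ : Type} (T : RE σ) : resem (norm T) = resem T := by
  induction T with
  | eps => rfl
  | sym a => rfl
  | union t₁ t₂ ih₁ ih₂ => show resem (RE.union (_root_.norm t₁) (_root_.norm t₂)) = _; simp [resem, ih₁, ih₂]
  | conc t₁ t₂ ih₁ ih₂ =>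
    show resem (distr (_root_.norm t₁) (_root_.norm t₂)) = _
    rw [resem_distr, ih₁, ih₂]; rfl
  | star a => rfl
  | plus a => rfl
end

section
/- If a conflict-free regular expression T contains exactly one occurrence of the union operator, then Norm(T) is in disjunctive normal form. -/
theorem isDNF_of_isClause {σ : Type} : ∀ (A : RE σ), isClause A → isDNF A
  | .eps, h => h
  | .sym _, h => h
  | .union _ _, h => h.elim
  | .conc _ _, h => h
  | .star _, h => h
  | .plus _, h => h

theorem isClause_of_isDNF_nonunion {σ : Type} : ∀ (A : RE σ),
    (∀ B C, A ≠ .union B C) → isDNF A → isClause A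
  | .eps, _, h => h
  | .sym _, _, h => h
  | .union B C, hn, _ => (hn B C rfl).elim
  | .conc _ _, _, h => h
  | .star _, _, h => h
  | .plus _, _, h => h

theorem isDNF_distr {σ : Type} : ∀ (A B : RE σ), isDNF A → isDNF B → isDNF (distr A B)
  | .union A₁ A₂, B, hA, hB => by simp only [distr]; exact ⟨isDNF_distr A₁ B hA.1 hB, isDNF_distr A₂ B hA.2 hB⟩
  | .eps, .union B₁ B₂, hA, hB => by simp only [distr]; exact ⟨isDNF_distr _ B₁ hA hB.1, isDNF_distr _ B₂ hA hB.2⟩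
  | .sym a, .union B₁ B₂, hA, hB => by simp only [distr]; exact ⟨isDNF_distr _ B₁ hA hB.1, isDNF_distr _ B₂ hA hB.2⟩
  | .conc A₁ A₂, .union B₁ B₂, hA, hB => by simp only [distr]; exact ⟨isDNF_distr _ B₁ hA hB.1, isDNF_distr _ B₂ hA hB.2⟩
  | .star a, .union B₁ B₂, hA, hB => by simp only [distr]; exact ⟨isDNF_distr _ B₁ hA hB.1, isDNF_distr _ B₂ hA hB.2⟩
  | .plus a, .union B₁ B₂, hA, hB => by simp only [distr]; exact ⟨isDNF_distr _ B₁ hA hB.1, isDNF_distr _ B₂ hA hB.2⟩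
  | .eps, .eps, hA, hB => by simp only [distr, isDNF, isClause]; exact ⟨hA, hB⟩
  | .eps, .sym _, hA, hB => by simp only [distr, isDNF, isClause]; exact ⟨hA, hB⟩
  | .eps, .conc _ _, hA, hB => by simp only [distr, isDNF, isClause]; exact ⟨hA, hB⟩
  | .eps, .star _, hA, hB => by simp only [distr, isDNF, isClause]; exact ⟨hA, hB⟩
  | .eps, .plus _, hA, hB => by simp only [distr, isDNF, isClause]; exact ⟨hA, hB⟩
  | .sym _, .eps, hA, hB => by simp only [distr, isDNF, isClause]; exact ⟨hA, hB⟩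
  | .sym _, .sym _, hA, hB => by simp only [distr, isDNF, isClause]; exact ⟨hA, hB⟩
  | .sym _, .conc _ _, hA, hB => by simp only [distr, isDNF, isClause]; exact ⟨hA, hB⟩
  | .sym _, .star _, hA, hB => by simp only [distr, isDNF, isClause]; exact ⟨hA, hB⟩
  | .sym _, .plus _, hA, hB => by simp only [distr, isDNF, isClause]; exact ⟨hA, hB⟩
  | .conc _ _, .eps, hA, hB => by simp only [distr, isDNF, isClause]; exact ⟨hA, hB⟩
  | .conc _ _, .sym _, hA, hB => by simp only [distr, isDNF, isClause]; exact ⟨hA, hB⟩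
  | .conc _ _, .conc _ _, hA, hB => by simp only [distr, isDNF, isClause]; exact ⟨hA, hB⟩
  | .conc _ _, .star _, hA, hB => by simp only [distr, isDNF, isClause]; exact ⟨hA, hB⟩
  | .conc _ _, .plus _, hA, hB => by simp only [distr, isDNF, isClause]; exact ⟨hA, hB⟩
  | .star _, .eps, hA, hB => by simp only [distr, isDNF, isClause]; exact ⟨hA, hB⟩
  | .star _, .sym _, hA, hB => by simp only [distr, isDNF, isClause]; exact ⟨hA, hB⟩
  | .star _, .conc _ _, hA, hB => by simp only [distr, isDNF, isClause]; exact ⟨hA, hB⟩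
  | .star _, .star _, hA, hB => by simp only [distr, isDNF, isClause]; exact ⟨hA, hB⟩
  | .star _, .plus _, hA, hB => by simp only [distr, isDNF, isClause]; exact ⟨hA, hB⟩
  | .plus _, .eps, hA, hB => by simp only [distr, isDNF, isClause]; exact ⟨hA, hB⟩
  | .plus _, .sym _, hA, hB => by simp only [distr, isDNF, isClause]; exact ⟨hA, hB⟩
  | .plus _, .conc _ _, hA, hB => by simp only [distr, isDNF, isClause]; exact ⟨hA, hB⟩
  | .plus _, .star _, hA, hB => by simp only [distr, isDNF, isClause]; exact ⟨hA, hB⟩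
  | .plus _, .plus _, hA, hB => by simp only [distr, isDNF, isClause]; exact ⟨hA, hB⟩

theorem isDNF_norm {σ : Type} : ∀ (T : RE σ), isDNF (norm T)
  | .eps => trivial
  | .sym _ => trivial
  | .union t₁ t₂ => ⟨isDNF_norm t₁, isDNF_norm t₂⟩
  | .conc t₁ t₂ => isDNF_distr _ _ (isDNF_norm t₁) (isDNF_norm t₂)
  | .star _ => trivial
  | .plus _ => trivial

theorem norm_isDNF_of_single_union {σ : Type} [DecidableEq σ] (T : RE σ)
    (hcf : CF T) (h1 : unionCount T = 1) : isDNF (norm T) := isDNF_norm T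
end

section
/- The graph schema S = { e1 = (ε, a·b·c·c), e2 = (a·b·c, ε) } is empty: no finite data graph conforms to S. -/
variable {V σ : Type} [DecidableEq V] [DecidableEq σ]

/-- Multiset of labels of incoming edges of `v` in edge set `E`. -/
def inLabels (E : Finset (V × σ × V)) (v : V) : Multiset σ :=
  ((E.filter (fun t => t.2.2 = v)).val.map (fun t => t.2.1))

/-- Multiset of labels of outgoing edges of `v` in edge set `E`. -/
def outLabels (E : Finset (V × σ × V)) (v : V) : Multiset σ :=
  ((E.filter (fun t => t.1 = v)).val.map (fun t => t.2.1))

/-- A graph (with vertex set `V` and edge set `E`) conforms to a schema `S`,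
given as a set of pairs of multiset languages, if every node's multisets of
incoming and outgoing edge labels lie in the languages of some schema element. -/
def Conforms (E : Finset (V × σ × V))
    (S : Set (Set (Multiset σ) × Set (Multiset σ))) : Prop :=
  ∀ v : V, ∃ e ∈ S, inLabels E v ∈ e.1 ∧ outLabels E v ∈ e.2

lemma sum_card_out {V σ : Type} [DecidableEq V] [DecidableEq σ] [Fintype V]
    (E : Finset (V × σ × V)) :
    ∑ v, Multiset.card (outLabels E v) = E.card := by
  simp only [outLabels, Multiset.card_map]
  exact (Finset.card_eq_sum_card_fiberwise
    (f := fun t : V × σ × V => t.1) (fun t _ => Finset.mem_univ t.1)).symm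

lemma sum_card_in {V σ : Type} [DecidableEq V] [DecidableEq σ] [Fintype V]
    (E : Finset (V × σ × V)) :
    ∑ v, Multiset.card (inLabels E v) = E.card := by
  simp only [inLabels, Multiset.card_map]
  exact (Finset.card_eq_sum_card_fiberwise
    (f := fun t : V × σ × V => t.2.2) (fun t _ => Finset.mem_univ t.2.2)).symm

lemma count_out {V σ : Type} [DecidableEq V] [DecidableEq σ] [Fintype V]
    (E : Finset (V × σ × V)) (ℓ : σ) :
    ∑ v, (outLabels E v).count ℓ = (E.filter fun t => ℓ = t.2.1).card := by
  have h1 : ∀ v, (outLabels E v).count ℓ =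
      ((E.filter fun t => ℓ = t.2.1).filter fun t => t.1 = v).card := by
    intro v
    rw [outLabels, Multiset.count_map]
    rw [Finset.filter_comm]
    rfl
  simp only [h1]
  exact (Finset.card_eq_sum_card_fiberwise
    (f := fun t : V × σ × V => t.1) (fun t _ => Finset.mem_univ t.1)).symm

lemma count_in {V σ : Type} [DecidableEq V] [DecidableEq σ] [Fintype V]
    (E : Finset (V × σ × V)) (ℓ : σ) :
    ∑ v, (inLabels E v).count ℓ = (E.filter fun t => ℓ = t.2.1).card := by
  have h1 : ∀ v, (inLabels E v).count ℓ =
      ((E.filter fun t => ℓ = t.2.1).filter fun t => t.2.2 = v).card := by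
    intro v
    rw [inLabels, Multiset.count_map]
    rw [Finset.filter_comm]
    rfl
  simp only [h1]
  exact (Finset.card_eq_sum_card_fiberwise
    (f := fun t : V × σ × V => t.2.2) (fun t _ => Finset.mem_univ t.2.2)).symm

/-- The schema `{ e₁ = (ε, a·b·c·c), e₂ = (a·b·c, ε) }` (with `a,b,c` the
three symbols of `Fin 3`) is empty: no (nonempty) finite data graph conforms to it. -/
theorem schema_empty_example {V : Type} [DecidableEq V] [Fintype V]
    (E : Finset (V × Fin 3 × V))
    (h : Conforms E
      ({ ⟨{(0 : Multiset (Fin 3))}, {({0, 1, 2, 2} : Multiset (Fin 3))}⟩,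
         ⟨{({0, 1, 2} : Multiset (Fin 3))}, {(0 : Multiset (Fin 3))}⟩ } :
        Set (Set (Multiset (Fin 3)) × Set (Multiset (Fin 3))))) :
    IsEmpty V := by
  classical
  have hcase : ∀ v : V,
      (inLabels E v = 0 ∧ outLabels E v = ({0, 1, 2, 2} : Multiset (Fin 3))) ∨
      (inLabels E v = ({0, 1, 2} : Multiset (Fin 3)) ∧ outLabels E v = 0) := by
    intro v
    obtain ⟨e, he, h1, h2⟩ := h v
    rcases he with he | he <;> subst he <;> simp_all
  set A : Finset V := Finset.univ.filter (fun v => inLabels E v = 0) with hA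
  have hmemA : ∀ v : V, v ∈ A ↔ inLabels E v = 0 := by
    intro v; simp [hA]
  have hA1 : ∀ v ∈ A, outLabels E v = ({0, 1, 2, 2} : Multiset (Fin 3)) := by
    intro v hv
    rcases hcase v with ⟨_, h2⟩ | ⟨h1, _⟩
    · exact h2
    · rw [hmemA] at hv; rw [hv] at h1; exact absurd h1.symm (by decide)
  have hA2 : ∀ v ∉ A, inLabels E v = ({0, 1, 2} : Multiset (Fin 3)) ∧ outLabels E v = 0 := by
    intro v hv
    rcases hcase v with ⟨h1, _⟩ | hc
    · exact absurd ((hmemA v).2 h1) hv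
    · exact hc
  -- total out = total in
  have e1 : 4 * A.card = E.card := by
    rw [← sum_card_out E, ← Finset.sum_filter_add_sum_filter_not Finset.univ
      (fun v => inLabels E v = 0)]
    have hl : ∑ v ∈ A, Multiset.card (outLabels E v) = ∑ v ∈ A, 4 := by
      refine Finset.sum_congr rfl fun v hv => ?_
      rw [hA1 v hv]; decide
    have hr : ∑ v ∈ Finset.univ.filter (fun v => ¬ inLabels E v = 0),
        Multiset.card (outLabels E v) = 0 := by
      refine Finset.sum_eq_zero fun v hv => ?_
      have : v ∉ A := by simp [hA] at hv ⊢; exact hv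
      rw [(hA2 v this).2]; rfl
    rw [← hA]
    rw [hl, hr, Finset.sum_const, add_zero, smul_eq_mul, mul_comm]
  have e2 : 3 * ((Finset.univ : Finset V).card - A.card) = E.card := by
    rw [← sum_card_in E, ← Finset.sum_filter_add_sum_filter_not Finset.univ
      (fun v => inLabels E v = 0)]
    have hl : ∑ v ∈ A, Multiset.card (inLabels E v) = 0 := by
      refine Finset.sum_eq_zero fun v hv => ?_
      rw [(hmemA v).1 hv]; rfl
    have hr : ∑ v ∈ Finset.univ.filter (fun v => ¬ inLabels E v = 0),
        Multiset.card (inLabels E v) =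
        ∑ v ∈ Finset.univ.filter (fun v => ¬ inLabels E v = 0), 3 := by
      refine Finset.sum_congr rfl fun v hv => ?_
      have : v ∉ A := by simp [hA] at hv ⊢; exact hv
      rw [(hA2 v this).1]; decide
    rw [← hA]
    rw [hl, hr, Finset.sum_const, zero_add, smul_eq_mul, mul_comm]
    congr 1
    rw [Finset.filter_not, Finset.card_sdiff_of_subset (Finset.filter_subset _ _)]
  -- count of label 2
  have e3 : 2 * A.card = (E.filter fun t => (2 : Fin 3) = t.2.1).card := by
    rw [← count_out E 2, ← Finset.sum_filter_add_sum_filter_not Finset.univ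
      (fun v => inLabels E v = 0)]
    have hl : ∑ v ∈ A, (outLabels E v).count 2 = ∑ v ∈ A, 2 := by
      refine Finset.sum_congr rfl fun v hv => ?_
      rw [hA1 v hv]; decide
    have hr : ∑ v ∈ Finset.univ.filter (fun v => ¬ inLabels E v = 0),
        (outLabels E v).count 2 = 0 := by
      refine Finset.sum_eq_zero fun v hv => ?_
      have : v ∉ A := by simp [hA] at hv ⊢; exact hv
      rw [(hA2 v this).2]; rfl
    rw [← hA]
    rw [hl, hr, Finset.sum_const, add_zero, smul_eq_mul, mul_comm]
  have e4 : ((Finset.univ : Finset V).card - A.card) = (E.filter fun t => (2 : Fin 3) = t.2.1).card := by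
    rw [← count_in E 2, ← Finset.sum_filter_add_sum_filter_not Finset.univ
      (fun v => inLabels E v = 0)]
    have hl : ∑ v ∈ A, (inLabels E v).count 2 = 0 := by
      refine Finset.sum_eq_zero fun v hv => ?_
      rw [(hmemA v).1 hv]; rfl
    have hr : ∑ v ∈ Finset.univ.filter (fun v => ¬ inLabels E v = 0),
        (inLabels E v).count 2 =
        ∑ v ∈ Finset.univ.filter (fun v => ¬ inLabels E v = 0), 1 := by
      refine Finset.sum_congr rfl fun v hv => ?_
      have : v ∉ A := by simp [hA] at hv ⊢; exact hv
      rw [(hA2 v this).1]; decide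
    rw [← hA]
    rw [hl, hr, Finset.sum_const, zero_add, smul_eq_mul, mul_one]
    rw [Finset.filter_not, Finset.card_sdiff_of_subset (Finset.filter_subset _ _)]
  have hle : A.card ≤ Finset.univ.card := Finset.card_le_card (Finset.subset_univ A)
  have hcard : (Finset.univ : Finset V).card = 0 := by omega
  rw [Finset.card_eq_zero, Finset.univ_eq_empty_iff] at hcard
  exact hcard
end

section
/- The graph schema { e1 = (a·b·c, a·b), e2 = (a·b·c, a·c) } is empty: no nonempty finite data graph conforms to it. -/
variable {V σ : Type} [DecidableEq V] [DecidableEq σ]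

lemma count_inLabels (E : Finset (V × σ × V)) (v : V) (l : σ) :
    Multiset.count l (inLabels E v)
      = ((E.filter (fun t => t.2.1 = l)).filter (fun t => t.2.2 = v)).card := by
  unfold inLabels
  rw [Multiset.count_map]
  simp only [Finset.card, Finset.filter_filter, Finset.filter_val, Multiset.filter_filter]
  congr 1
  apply Multiset.filter_congr
  intro x _
  constructor <;> rintro ⟨h1, h2⟩ <;> simp_all

lemma count_outLabels (E : Finset (V × σ × V)) (v : V) (l : σ) :
    Multiset.count l (outLabels E v)
      = ((E.filter (fun t => t.2.1 = l)).filter (fun t => t.1 = v)).card := by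
  unfold outLabels
  rw [Multiset.count_map]
  simp only [Finset.card, Finset.filter_filter, Finset.filter_val, Multiset.filter_filter]
  congr 1
  apply Multiset.filter_congr
  intro x _
  constructor <;> rintro ⟨h1, h2⟩ <;> simp_all

lemma sum_count_in [Fintype V] (E : Finset (V × σ × V)) (l : σ) :
    ∑ v : V, Multiset.count l (inLabels E v) = (E.filter (fun t => t.2.1 = l)).card := by
  simp only [count_inLabels]
  exact (Finset.card_eq_sum_card_fiberwise (t := Finset.univ)
    (f := fun (t : V × σ × V) => t.2.2) (fun x _ => Finset.mem_univ _)).symm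

lemma sum_count_out [Fintype V] (E : Finset (V × σ × V)) (l : σ) :
    ∑ v : V, Multiset.count l (outLabels E v) = (E.filter (fun t => t.2.1 = l)).card := by
  simp only [count_outLabels]
  exact (Finset.card_eq_sum_card_fiberwise (t := Finset.univ)
    (f := fun (t : V × σ × V) => t.1) (fun x _ => Finset.mem_univ _)).symm

/-- The schema `{ e₁ = (a·b·c, a·b), e₂ = (a·b·c, a·c) }` is empty: every
conforming finite data graph has no nodes. -/
theorem schema_empty_abc {V : Type} [DecidableEq V] [Fintype V]
    (E : Finset (V × Fin 3 × V))
    (h : Conforms E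
      ({ ⟨{({0, 1, 2} : Multiset (Fin 3))}, {({0, 1} : Multiset (Fin 3))}⟩,
         ⟨{({0, 1, 2} : Multiset (Fin 3))}, {({0, 2} : Multiset (Fin 3))}⟩ } :
        Set (Set (Multiset (Fin 3)) × Set (Multiset (Fin 3))))) :
    IsEmpty V := by
  have key : ∀ v : V,
      Multiset.count 1 (inLabels E v) + Multiset.count 2 (inLabels E v) = 2 ∧
      Multiset.count 1 (outLabels E v) + Multiset.count 2 (outLabels E v) = 1 := by
    intro v
    obtain ⟨e, he, hin, hout⟩ := h v
    simp only [Set.mem_insert_iff, Set.mem_singleton_iff] at he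
    rcases he with rfl | rfl <;>
      simp only [Set.mem_singleton_iff] at hin hout <;> rw [hin, hout] <;> decide
  have hsum1 : ∑ v : V, (Multiset.count 1 (inLabels E v) + Multiset.count 2 (inLabels E v))
      = 2 * Fintype.card V := by
    rw [Finset.sum_congr rfl (fun v _ => (key v).1)]
    simp [mul_comm]
  have hsum2 : ∑ v : V, (Multiset.count 1 (outLabels E v) + Multiset.count 2 (outLabels E v))
      = Fintype.card V := by
    rw [Finset.sum_congr rfl (fun v _ => (key v).2)]
    simp
  rw [Finset.sum_add_distrib, sum_count_in, sum_count_in] at hsum1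
  rw [Finset.sum_add_distrib, sum_count_out, sum_count_out] at hsum2
  have : 2 * Fintype.card V = Fintype.card V := by omega
  have hc : Fintype.card V = 0 := by omega
  exact Fintype.card_eq_zero_iff.mp hc
end
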